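/- Let E and F be GTESs over a signature Σ such that the GTRS R⟨E∪F,∅⟩ is total, and let W = ST(E ∪ F). Then ↔*_{E∪F} ⊆ ↔*_E ∪ ↔*_F if and only if for every p ∈ W, the ↔*_{E∪F}-class of p equals the ↔*_E-class of p or the ↔*_{E∪F}-class of p equals the ↔*_F-class of p. -/
import Mathlib


inductive GTerm (S : Type) (ar : S → ℕ) : Type
  | node (σ : S) (args : Fin (ar σ) → GTerm S ar) : GTerm S ar

/-- The congruence on the ground term algebra generated by a set of equations `E`:
the smallest equivalence relation containing `E` and compatible with all operations. -/
inductive EqCong {S : Type} {ar : S → ℕ} (E : Set (GTerm S ar × GTerm S ar)) :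
    GTerm S ar → GTerm S ar → Prop
  | base {s t : GTerm S ar} : (s, t) ∈ E → EqCong E s t
  | refl (t : GTerm S ar) : EqCong E t t
  | symm {s t : GTerm S ar} : EqCong E s t → EqCong E t s
  | trans {s t u : GTerm S ar} : EqCong E s t → EqCong E t u → EqCong E s u
  | lift {σ : S} {f g : Fin (ar σ) → GTerm S ar} :
      (∀ i, EqCong E (f i) (g i)) → EqCong E (GTerm.node σ f) (GTerm.node σ g)

/-- A congruence on the ground term algebra: an equivalence relation compatible
with all operations. -/
def IsTermCongruence {S : Type} {ar : S → ℕ} (r : GTerm S ar → GTerm S ar → Prop) : Prop :=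
  Equivalence r ∧
    ∀ (σ : S) (f g : Fin (ar σ) → GTerm S ar),
      (∀ i, r (f i) (g i)) → r (GTerm.node σ f) (GTerm.node σ g)

/-- `Subterm s t` : `s` is a subterm of `t`. -/
inductive Subterm {S : Type} {ar : S → ℕ} : GTerm S ar → GTerm S ar → Prop
  | refl (t : GTerm S ar) : Subterm t t
  | node {s : GTerm S ar} {σ : S} {f : Fin (ar σ) → GTerm S ar} (i : Fin (ar σ)) :
      Subterm s (f i) → Subterm s (GTerm.node σ f)

/-- `ST E` : the set of all subterms of sides of equations of `E`. -/
def STSet {S : Type} {ar : S → ℕ} (E : Set (GTerm S ar × GTerm S ar)) : Set (GTerm S ar) :=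
  {t | ∃ p ∈ E, Subterm t p.1 ∨ Subterm t p.2}

/-- The `Θ⟨G⟩`-class of `t` inside `W`. -/
def thCls {S : Type} {ar : S → ℕ} (G : Set (GTerm S ar × GTerm S ar))
    (W : Set (GTerm S ar)) (t : GTerm S ar) : Set (GTerm S ar) :=
  {u | u ∈ W ∧ EqCong G t u}

/-- `Θ⟨G⟩` as a set of pairs: the restriction of the generated congruence to `W × W`. -/
def Theta {S : Type} {ar : S → ℕ} (G : Set (GTerm S ar × GTerm S ar))
    (W : Set (GTerm S ar)) : Set (GTerm S ar × GTerm S ar) :=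
  {p | p.1 ∈ W ∧ p.2 ∈ W ∧ EqCong G p.1 p.2}

/-- `C⟨G⟩` : the set of `Θ⟨G⟩`-classes of elements of `W`, viewed as new constants. -/
def CCl {S : Type} {ar : S → ℕ} (G : Set (GTerm S ar × GTerm S ar))
    (W : Set (GTerm S ar)) : Set (Set (GTerm S ar)) :=
  {A | ∃ t ∈ W, A = thCls G W t}

/-- Terms over the signature extended with a type `C` of new constants. -/
inductive XTerm (S : Type) (ar : S → ℕ) (C : Type) : Type
  | const (c : C) : XTerm S ar C
  | node (σ : S) (args : Fin (ar σ) → XTerm S ar C) : XTerm S ar C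

abbrev XRule (S : Type) (ar : S → ℕ) (C : Type) : Type :=
  XTerm S ar C × XTerm S ar C

/-- Embedding of ground terms over `Σ` into the extended terms. -/
def GTerm.toX {S : Type} {ar : S → ℕ} {C : Type} : GTerm S ar → XTerm S ar C
  | .node σ f => .node σ (fun i => (f i).toX)

/-- The GTRS `R⟨G⟩` (relative to the subterm set `W`): its rules are exactly
`σ(t₁/Θ⟨G⟩, …, t_m/Θ⟨G⟩) → σ(t₁,…,t_m)/Θ⟨G⟩` for `σ(t₁,…,t_m) ∈ W`. -/
def RRsys {S : Type} {ar : S → ℕ} (G : Set (GTerm S ar × GTerm S ar))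
    (W : Set (GTerm S ar)) : Set (XRule S ar (Set (GTerm S ar))) :=
  {r | ∃ (σ : S) (ts : Fin (ar σ) → GTerm S ar),
      GTerm.node σ ts ∈ W ∧
      r = (XTerm.node σ (fun i => XTerm.const (thCls G W (ts i))),
           XTerm.const (thCls G W (GTerm.node σ ts)))}

/-- One-step rewriting by a GTRS `R`. -/
inductive Rew {S : Type} {ar : S → ℕ} {C : Type} (R : Set (XRule S ar C)) :
    XTerm S ar C → XTerm S ar C → Prop
  | rule {l r : XTerm S ar C} : (l, r) ∈ R → Rew R l r
  | node {σ : S} {f g : Fin (ar σ) → XTerm S ar C} (i : Fin (ar σ)) :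
      Rew R (f i) (g i) → (∀ j, j ≠ i → f j = g j) →
      Rew R (XTerm.node σ f) (XTerm.node σ g)

/-- `→*_R` : reflexive–transitive closure of one-step rewriting. -/
def RewStar {S : Type} {ar : S → ℕ} {C : Type} (R : Set (XRule S ar C)) :
    XTerm S ar C → XTerm S ar C → Prop :=
  Relation.ReflTransGen (Rew R)

/-- A GTRS is total (w.r.t. a set `Cst` of constants) if every `σ(a₁,…,a_m)` with
`a₁,…,a_m ∈ Cst` is the left-hand side of some rule. -/
def TotalR {S : Type} {ar : S → ℕ} (R : Set (XRule S ar (Set (GTerm S ar))))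
    (Cst : Set (Set (GTerm S ar))) : Prop :=
  ∀ (σ : S) (av : Fin (ar σ) → Set (GTerm S ar)), (∀ i, av i ∈ Cst) →
    ∃ rhs, (XTerm.node σ (fun i => XTerm.const (av i)), rhs) ∈ R

/-- An extended term containing no new constants, i.e. a ground term over `Σ`. -/
def IsGroundX {S : Type} {ar : S → ℕ} {C : Type} (t : XTerm S ar C) : Prop :=
  ∃ s : GTerm S ar, GTerm.toX s = t

/-- `ProperExt b t` : `t = δ[b]` for some one-hole context `δ` over `Σ`
different from the hole itself. -/
inductive ProperExt {S : Type} {ar : S → ℕ} {C : Type} (b : XTerm S ar C) :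
    XTerm S ar C → Prop
  | base {σ : S} {f : Fin (ar σ) → XTerm S ar C} (i : Fin (ar σ)) :
      f i = b → (∀ j, j ≠ i → IsGroundX (f j)) → ProperExt b (XTerm.node σ f)
  | step {σ : S} {f : Fin (ar σ) → XTerm S ar C} (i : Fin (ar σ)) :
      ProperExt b (f i) → (∀ j, j ≠ i → IsGroundX (f j)) → ProperExt b (XTerm.node σ f)

/-- `R` reaches the constant `a` from a proper extension of the constant `b`. -/
def ReachesPE {S : Type} {ar : S → ℕ} (R : Set (XRule S ar (Set (GTerm S ar))))
    (a b : Set (GTerm S ar)) : Prop :=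
  ∃ t, ProperExt (XTerm.const b) t ∧ RewStar R t (XTerm.const a)

/-- The arc relation `A[E;F]` of the auxiliary directed graph: `(a,b)` is an arc iff some
rule `σ(a₁,…,a_m) → a` of `R` has `b = aᵢ` for some `i`. -/
def AuxArc {S : Type} {ar : S → ℕ} (R : Set (XRule S ar (Set (GTerm S ar))))
    (a b : Set (GTerm S ar)) : Prop :=
  ∃ (σ : S) (av : Fin (ar σ) → Set (GTerm S ar)) (i : Fin (ar σ)),
    (XTerm.node σ (fun j => XTerm.const (av j)), XTerm.const a) ∈ R ∧ av i = b

/-- `R1` keeps up with `Rall` writing the constant `a`. -/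
def KeepsUp {S : Type} {ar : S → ℕ}
    (R1 Rall : Set (XRule S ar (Set (GTerm S ar))))
    (C1 : Set (Set (GTerm S ar))) (a : Set (GTerm S ar)) : Prop :=
  ∀ (σ : S) (av : Fin (ar σ) → Set (GTerm S ar)),
    (XTerm.node σ (fun i => XTerm.const (av i)), XTerm.const a) ∈ Rall →
    ∀ bv : Fin (ar σ) → Set (GTerm S ar),
      (∀ i, bv i ∈ C1) → (∀ i, bv i ⊆ av i) →
      ∃ rhs, (XTerm.node σ (fun i => XTerm.const (bv i)), rhs) ∈ R1

/-- `R1` (with constant set `C1`) simulates `Rall` (with constant set `Call`) on `a`. -/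
def SimulatesOn {S : Type} {ar : S → ℕ}
    (R1 Rall : Set (XRule S ar (Set (GTerm S ar))))
    (C1 Call : Set (Set (GTerm S ar))) (a : Set (GTerm S ar)) : Prop :=
  a ∈ C1 ∧ ∀ b ∈ Call, ReachesPE Rall a b → KeepsUp R1 Rall C1 b

/-- `R⟨E,F⟩` and `R⟨F,E⟩` together simulate `R⟨E∪F,∅⟩`. -/
def TogetherSim {S : Type} {ar : S → ℕ}
    (E F : Set (GTerm S ar × GTerm S ar)) : Prop :=
  ∀ a ∈ CCl (E ∪ F) (STSet (E ∪ F)),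
    SimulatesOn (RRsys E (STSet (E ∪ F))) (RRsys (E ∪ F) (STSet (E ∪ F)))
      (CCl E (STSet (E ∪ F))) (CCl (E ∪ F) (STSet (E ∪ F))) a ∨
    SimulatesOn (RRsys F (STSet (E ∪ F))) (RRsys (E ∪ F) (STSet (E ∪ F)))
      (CCl F (STSet (E ∪ F))) (CCl (E ∪ F) (STSet (E ∪ F))) a

lemma EqCong.mono {S : Type} {ar : S → ℕ} {E G : Set (GTerm S ar × GTerm S ar)}
    (hEG : E ⊆ G) {s t : GTerm S ar} (h : EqCong E s t) : EqCong G s t := by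
  induction h with
  | base h => exact .base (hEG h)
  | refl t => exact .refl t
  | symm _ ih => exact .symm ih
  | trans _ _ ih1 ih2 => exact .trans ih1 ih2
  | lift _ ih => exact .lift ih

lemma Subterm.trans' {S : Type} {ar : S → ℕ} {a b c : GTerm S ar}
    (h1 : Subterm a b) (h2 : Subterm b c) : Subterm a c := by
  induction h2 with
  | refl => exact h1
  | node i _ ih => exact .node i ih

lemma STSet.subterm_closed {S : Type} {ar : S → ℕ} {G : Set (GTerm S ar × GTerm S ar)}
    {s t : GTerm S ar} (ht : t ∈ STSet G) (hst : Subterm s t) : s ∈ STSet G := by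
  obtain ⟨p, hp, h⟩ := ht
  exact ⟨p, hp, h.imp (Subterm.trans' hst) (Subterm.trans' hst)⟩

/-- Totality implies every ground term is E∪F-equivalent to an element of W. -/
lemma reach_W {S : Type} {ar : S → ℕ} (E F : Set (GTerm S ar × GTerm S ar))
    (htot : TotalR (RRsys (E ∪ F) (STSet (E ∪ F))) (CCl (E ∪ F) (STSet (E ∪ F)))) :
    ∀ t : GTerm S ar, ∃ w ∈ STSet (E ∪ F), EqCong (E ∪ F) t w := by
  intro t
  induction t with
  | node σ f ih =>
    choose w hwW hwE using ih
    obtain ⟨rhs, hrule⟩ := htot σ (fun i => thCls (E ∪ F) (STSet (E ∪ F)) (w i))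
      (fun i => ⟨w i, hwW i, rfl⟩)
    obtain ⟨σ', ts, hts, heq⟩ := hrule
    have h1 : XTerm.node σ (fun i => XTerm.const (thCls (E ∪ F) (STSet (E ∪ F)) (w i)))
        = XTerm.node σ' (fun i => XTerm.const (thCls (E ∪ F) (STSet (E ∪ F)) (ts i))) :=
      congrArg Prod.fst heq
    injection h1 with hσ hf
    subst hσ
    have hf' := eq_of_heq hf
    refine ⟨GTerm.node σ ts, hts, .lift fun i => ?_⟩
    have hcl : thCls (E ∪ F) (STSet (E ∪ F)) (w i) = thCls (E ∪ F) (STSet (E ∪ F)) (ts i) := by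
      have := congrFun hf' i
      injection this
    have htsW : ts i ∈ STSet (E ∪ F) :=
      STSet.subterm_closed hts (Subterm.node i (Subterm.refl _))
    have hw_mem : w i ∈ thCls (E ∪ F) (STSet (E ∪ F)) (ts i) := by
      rw [← hcl]; exact ⟨hwW i, .refl _⟩
    exact (hwE i).trans (hw_mem.2.symm)

theorem stmt_7 {S : Type} [Fintype S] {ar : S → ℕ} (hconst : ∃ c : S, ar c = 0)
    (E F : Set (GTerm S ar × GTerm S ar)) (hEfin : E.Finite) (hFfin : F.Finite)
    (htot : TotalR (RRsys (E ∪ F) (STSet (E ∪ F))) (CCl (E ∪ F) (STSet (E ∪ F)))) :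
    (∀ s t : GTerm S ar, EqCong (E ∪ F) s t → (EqCong E s t ∨ EqCong F s t)) ↔
    (∀ p ∈ STSet (E ∪ F),
      {s | EqCong (E ∪ F) p s} = {s | EqCong E p s} ∨
      {s | EqCong (E ∪ F) p s} = {s | EqCong F p s}) := by
  constructor
  · intro h p _hp
    by_cases hall : ∀ s, EqCong (E ∪ F) p s → EqCong E p s
    · left
      ext s
      exact ⟨fun hs => hall s hs, fun hs => hs.mono Set.subset_union_left⟩
    · push_neg at hall
      obtain ⟨s1, hs1, hs1E⟩ := hall
      have hs1F : EqCong F p s1 := (h p s1 hs1).resolve_left hs1E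
      right
      ext s
      constructor
      · intro hs
        rcases h p s hs with hE | hF
        · rcases h s1 s (hs1.symm.trans hs) with hE' | hF'
          · exact absurd (hE.trans hE'.symm) hs1E
          · exact hs1F.trans hF'
        · exact hF
      · intro hs
        exact hs.mono Set.subset_union_right
  · intro h s t hst
    obtain ⟨w, hwW, hsw⟩ := reach_W E F htot s
    have hws : EqCong (E ∪ F) w s := hsw.symm
    have hwt : EqCong (E ∪ F) w t := hws.trans hst
    rcases h w hwW with hcls | hcls
    · have h1 : EqCong E w s := by
        have := Set.ext_iff.mp hcls s; exact this.mp hws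
      have h2 : EqCong E w t := by
        have := Set.ext_iff.mp hcls t; exact this.mp hwt
      exact Or.inl (h1.symm.trans h2)
    · have h1 : EqCong F w s := by
        have := Set.ext_iff.mp hcls s; exact this.mp hws
      have h2 : EqCong F w t := by
        have := Set.ext_iff.mp hcls t; exact this.mp hwt
      exact Or.inr (h1.symm.trans h2)
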